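/- arXiv:0708.4173 — 3 statements merged into one kernel-verified Lean document; each statement's English description precedes it below -/
import Mathlib

section
/- Given a recollement (S, T, U) and a Serre functor F on T with quasi-inverse F', the functor i_! := F' ∘ i_* ∘ i^! ∘ F ∘ i_* : S → T is left adjoint to i^* : T → S. -/
/-!
Setting: `k` a field; `S`, `T`, `U` skeletally small `k`-linear triangulated categories
with finite-dimensional Hom-spaces, `T` with split idempotents.  A recollement
`(S, T, U)` as in [BBD], and (right/left) Serre functors in the sense of
Reiten–Van den Bergh.
-/

open CategoryTheory CategoryTheory.Limits CategoryTheory.Pretriangulated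

universe v₁ v₂ v₃ u₁ u₂ u₃ u₄

/-- A right Serre structure on an endofunctor `F` of a `k`-linear category `C`:
isomorphisms `C(X, Y) ≅ C(Y, F X)^∨`, natural in `X` and `Y`.
A right Serre functor is a functor `F` equipped with such a structure. -/
structure RightSerreStructure (k : Type u₄) [Field k] (C : Type u₁) [Category.{v₁} C]
    [Preadditive C] [CategoryTheory.Linear k C] (F : C ⥤ C) where
  equiv : ∀ X Y : C, (X ⟶ Y) ≃ₗ[k] Module.Dual k (Y ⟶ F.obj X)
  naturality_left : ∀ {X X' Y : C} (f : X' ⟶ X) (φ : X ⟶ Y) (u : Y ⟶ F.obj X'),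
    equiv X' Y (f ≫ φ) u = equiv X Y φ (u ≫ F.map f)
  naturality_right : ∀ {X Y Y' : C} (φ : X ⟶ Y) (g : Y ⟶ Y') (u : Y' ⟶ F.obj X),
    equiv X Y' (φ ≫ g) u = equiv X Y φ (g ≫ u)

/-- A left Serre structure on an endofunctor `F'` of a `k`-linear category `C`:
isomorphisms `C(X, Y) ≅ C(F' Y, X)^∨`, natural in `X` and `Y`.
A left Serre functor is a functor `F'` equipped with such a structure. -/
structure LeftSerreStructure (k : Type u₄) [Field k] (C : Type u₁) [Category.{v₁} C]
    [Preadditive C] [CategoryTheory.Linear k C] (F' : C ⥤ C) where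
  equiv : ∀ X Y : C, (X ⟶ Y) ≃ₗ[k] Module.Dual k (F'.obj Y ⟶ X)
  naturality_left : ∀ {X X' Y : C} (f : X' ⟶ X) (φ : X ⟶ Y) (u : F'.obj Y ⟶ X'),
    equiv X' Y (f ≫ φ) u = equiv X Y φ (u ≫ f)
  naturality_right : ∀ {X Y Y' : C} (φ : X ⟶ Y) (g : Y ⟶ Y') (u : F'.obj Y' ⟶ X),
    equiv X Y' (φ ≫ g) u = equiv X Y φ (F'.map g ≫ u)

/-- A Serre functor: an essentially surjective right Serre functor. -/
structure SerreFunctor (k : Type u₄) [Field k] (C : Type u₁) [Category.{v₁} C]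
    [Preadditive C] [CategoryTheory.Linear k C] where
  F : C ⥤ C
  rightSerre : RightSerreStructure k C F
  essSurj : F.EssSurj

/-- A recollement of triangulated categories `(S, T, U)`:
triangulated functors `i_* = iSt : S ⥤ T`, `i^* = iUp, i^! = iSh : T ⥤ S`,
`j^* = jUp : T ⥤ U`, `j_! = jLo, j_* = jSt : U ⥤ T` with the adjunctions,
vanishing, full faithfulness and distinguished-triangle conditions of [BBD, sec. 1.4]. -/
structure Recollement (S : Type u₁) (T : Type u₂) (U : Type u₃)
    [Category.{v₁} S] [Category.{v₂} T] [Category.{v₃} U]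
    [HasZeroObject S] [HasZeroObject T] [HasZeroObject U]
    [Preadditive S] [Preadditive T] [Preadditive U]
    [HasShift S ℤ] [HasShift T ℤ] [HasShift U ℤ]
    [∀ n : ℤ, (shiftFunctor S n).Additive] [∀ n : ℤ, (shiftFunctor T n).Additive]
    [∀ n : ℤ, (shiftFunctor U n).Additive]
    [Pretriangulated S] [Pretriangulated T] [Pretriangulated U] where
  /-- `i_* : S ⥤ T` -/
  iSt : S ⥤ T
  /-- `i^* : T ⥤ S` -/
  iUp : T ⥤ S
  /-- `i^! : T ⥤ S` -/
  iSh : T ⥤ S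
  /-- `j^* : T ⥤ U` -/
  jUp : T ⥤ U
  /-- `j_! : U ⥤ T` -/
  jLo : U ⥤ T
  /-- `j_* : U ⥤ T` -/
  jSt : U ⥤ T
  [commShift_iSt : iSt.CommShift ℤ]
  [commShift_iUp : iUp.CommShift ℤ]
  [commShift_iSh : iSh.CommShift ℤ]
  [commShift_jUp : jUp.CommShift ℤ]
  [commShift_jLo : jLo.CommShift ℤ]
  [commShift_jSt : jSt.CommShift ℤ]
  [isTriangulated_iSt : iSt.IsTriangulated]
  [isTriangulated_iUp : iUp.IsTriangulated]
  [isTriangulated_iSh : iSh.IsTriangulated]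
  [isTriangulated_jUp : jUp.IsTriangulated]
  [isTriangulated_jLo : jLo.IsTriangulated]
  [isTriangulated_jSt : jSt.IsTriangulated]
  /-- `(i^*, i_*)` is an adjoint pair. -/
  adj₁ : iUp ⊣ iSt
  /-- `(i_*, i^!)` is an adjoint pair. -/
  adj₂ : iSt ⊣ iSh
  /-- `(j_!, j^*)` is an adjoint pair. -/
  adj₃ : jLo ⊣ jUp
  /-- `(j^*, j_*)` is an adjoint pair. -/
  adj₄ : jUp ⊣ jSt
  /-- `j^* ∘ i_* = 0`. -/
  zero_comp : ∀ X : S, IsZero (jUp.obj (iSt.obj X))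
  fullyFaithful_iSt : iSt.FullyFaithful
  fullyFaithful_jLo : jLo.FullyFaithful
  fullyFaithful_jSt : jSt.FullyFaithful
  /-- The distinguished triangle `i_* i^! X ⟶ X ⟶ j_* j^* X ⟶`, whose morphisms into and
  out of `X` are the counit of `(i_*, i^!)` and the unit of `(j^*, j_*)`. -/
  triangle_a : ∀ X : T, ∃ δ : jSt.obj (jUp.obj X) ⟶ (iSt.obj (iSh.obj X))⟦(1 : ℤ)⟧,
    Triangle.mk (adj₂.counit.app X) (adj₄.unit.app X) δ ∈ distTriang T
  /-- The distinguished triangle `j_! j^* X ⟶ X ⟶ i_* i^* X ⟶`, whose morphisms into and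
  out of `X` are the counit of `(j_!, j^*)` and the unit of `(i^*, i_*)`. -/
  triangle_b : ∀ X : T, ∃ δ : iSt.obj (iUp.obj X) ⟶ (jLo.obj (jUp.obj X))⟦(1 : ℤ)⟧,
    Triangle.mk (adj₃.counit.app X) (adj₁.unit.app X) δ ∈ distTriang T

/-!
Serre duality turns an adjunction `M ⊣ N` of endofunctors of `T` into `F ⋙ N ⋙ F' ⊣ M`:
`T(F' N F Y, X) ≅ T(X, F F' N F Y)^∨ ≅ T(X, N F Y)^∨ ≅ T(M X, F Y)^∨ ≅ T(Y, M X)`.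
Apply this to `i_* i^* ⊣ i_* i^!` and restrict along the fully faithful `i_*`.
The third isomorphism needs `i_* i^*` to be `k`-linear, which holds because `i_*` is a fully
faithful right adjoint: `i_* i^* g` is the unique map with `unit ≫ i_* i^* g = g ≫ unit`.
-/

namespace CategoryTheory.Adjunction

section FullyFaithfulRightAdjoint

variable {C : Type u₁} {D : Type u₂} [Category.{v₁} C] [Category.{v₂} D]
  {L : C ⥤ D} {G : D ⥤ C} (adj : L ⊣ G) (hG : G.FullyFaithful)
include adj hG

lemma unit_comp_injective_of_fullyFaithful {X : C} {W : D}
    {m m' : G.obj (L.obj X) ⟶ G.obj W} (h : adj.unit.app X ≫ m = adj.unit.app X ≫ m') :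
    m = m' := by
  have h' : adj.homEquiv _ _ (hG.preimage m) = adj.homEquiv _ _ (hG.preimage m') := by
    simpa [homEquiv_unit] using h
  rw [← hG.map_preimage m, ← hG.map_preimage m', (adj.homEquiv _ _).injective h']

lemma additive_comp_of_fullyFaithful [Preadditive C] : (L ⋙ G).Additive where
  map_add {_ _} f g := adj.unit_comp_injective_of_fullyFaithful hG (by simp)

lemma linear_comp_of_fullyFaithful (k : Type u₄) [Semiring k] [Preadditive C] [Linear k C]
    [(L ⋙ G).Additive] : (L ⋙ G).Linear k where
  map_smul f c := adj.unit_comp_injective_of_fullyFaithful hG (by simp)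

end FullyFaithfulRightAdjoint

def homLinearEquiv {k : Type u₄} [Semiring k] {C : Type u₁} {D : Type u₂}
    [Category.{v₁} C] [Category.{v₂} D] [Preadditive C] [Preadditive D] [Linear k C] [Linear k D]
    {L : C ⥤ D} {G : D ⥤ C} (adj : L ⊣ G) [L.Additive] [L.Linear k] (X : C) (Y : D) :
    (L.obj X ⟶ Y) ≃ₗ[k] (X ⟶ G.obj Y) :=
  LinearEquiv.symm
    { (adj.homEquiv X Y).symm with
      map_add' := fun f g => by simp [homEquiv_counit]
      map_smul' := fun c f => by simp [homEquiv_counit] }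

section SerreDual

variable {k : Type u₄} [Field k] {C : Type u₁} [Category.{v₁} C] [Preadditive C] [Linear k C]

variable {F F' M N : C ⥤ C} (hF : RightSerreStructure k C F) (ε : F' ⋙ F ≅ 𝟭 C)
  (adj : M ⊣ N) [M.Additive] [M.Linear k]

def serreDualHomEquiv (Y X : C) : (F'.obj (N.obj (F.obj Y)) ⟶ X) ≃ₗ[k] (Y ⟶ M.obj X) :=
  hF.equiv _ X ≪≫ₗ (Linear.homCongr k (Iso.refl X) (ε.app _).symm).dualMap ≪≫ₗ
    (adj.homLinearEquiv X (F.obj Y)).dualMap ≪≫ₗ (hF.equiv Y (M.obj X)).symm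

lemma equiv_serreDualHomEquiv {Y X : C} (φ : F'.obj (N.obj (F.obj Y)) ⟶ X)
    (u : M.obj X ⟶ F.obj Y) :
    hF.equiv Y (M.obj X) (adj.serreDualHomEquiv hF ε Y X φ) u =
      hF.equiv _ X φ (adj.homEquiv _ _ u ≫ ε.inv.app _) := by
  simp [serreDualHomEquiv, homLinearEquiv, Linear.homCongr_apply]

lemma serreDualHomEquiv_comp {Y X X' : C} (φ : F'.obj (N.obj (F.obj Y)) ⟶ X) (g : X ⟶ X') :
    adj.serreDualHomEquiv hF ε Y X' (φ ≫ g) =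
      adj.serreDualHomEquiv hF ε Y X φ ≫ M.map g := by
  refine (hF.equiv Y (M.obj X')).injective (LinearMap.ext fun u => ?_)
  rw [equiv_serreDualHomEquiv, hF.naturality_right, hF.naturality_right,
    equiv_serreDualHomEquiv, homEquiv_naturality_left, Category.assoc]

lemma serreDualHomEquiv_map_comp {Y' Y X : C} (f : Y' ⟶ Y)
    (φ : F'.obj (N.obj (F.obj Y)) ⟶ X) :
    adj.serreDualHomEquiv hF ε Y' X ((F ⋙ N ⋙ F').map f ≫ φ) =
      f ≫ adj.serreDualHomEquiv hF ε Y X φ := by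
  refine (hF.equiv Y' (M.obj X)).injective (LinearMap.ext fun u => ?_)
  rw [equiv_serreDualHomEquiv, hF.naturality_left, hF.naturality_left,
    equiv_serreDualHomEquiv, homEquiv_naturality_right, Category.assoc, Category.assoc]
  congr 2
  exact (ε.inv.naturality _).symm

def serreDual : F ⋙ N ⋙ F' ⊣ M :=
  mkOfHomEquiv
    { homEquiv := fun Y X => (adj.serreDualHomEquiv hF ε Y X).toEquiv
      homEquiv_naturality_left_symm := fun f g => by
        rw [Equiv.symm_apply_eq]
        change _ = adj.serreDualHomEquiv hF ε _ _ (_ ≫ (adj.serreDualHomEquiv hF ε _ _).symm g)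
        rw [serreDualHomEquiv_map_comp, LinearEquiv.apply_symm_apply]
      homEquiv_naturality_right := fun φ g => adj.serreDualHomEquiv_comp hF ε φ g }

end SerreDual

end CategoryTheory.Adjunction

/-- Given a recollement `(S, T, U)` and a Serre functor `F` on `T` with quasi-inverse `F'`,
the functor `i_! := F' ∘ i_* ∘ i^! ∘ F ∘ i_* : S ⥤ T` is left adjoint to `i^* : T ⥤ S`. -/
theorem recollement_left_adjoint_of_iUp
    {k : Type u₄} [Field k]
    {S : Type u₁} {T : Type u₂} {U : Type u₃}
    [Category.{v₁} S] [Category.{v₂} T] [Category.{v₃} U]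
    [HasZeroObject S] [HasZeroObject T] [HasZeroObject U]
    [Preadditive S] [Preadditive T] [Preadditive U]
    [CategoryTheory.Linear k S] [CategoryTheory.Linear k T] [CategoryTheory.Linear k U]
    [HasShift S ℤ] [HasShift T ℤ] [HasShift U ℤ]
    [∀ n : ℤ, (shiftFunctor S n).Additive] [∀ n : ℤ, (shiftFunctor T n).Additive]
    [∀ n : ℤ, (shiftFunctor U n).Additive]
    [Pretriangulated S] [Pretriangulated T] [Pretriangulated U]
    [EssentiallySmall.{v₁} S] [EssentiallySmall.{v₂} T] [EssentiallySmall.{v₃} U]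
    [∀ X Y : S, FiniteDimensional k (X ⟶ Y)]
    [∀ X Y : T, FiniteDimensional k (X ⟶ Y)]
    [∀ X Y : U, FiniteDimensional k (X ⟶ Y)]
    [IsIdempotentComplete T]
    (R : Recollement S T U)
    (SF : SerreFunctor k T) (F' : T ⥤ T)
    (η : SF.F ⋙ F' ≅ 𝟭 T) (ε : F' ⋙ SF.F ≅ 𝟭 T) :
    Nonempty ((R.iSt ⋙ SF.F ⋙ R.iSh ⋙ R.iSt ⋙ F') ⊣ R.iUp) := by
  have := R.adj₁.additive_comp_of_fullyFaithful R.fullyFaithful_iSt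
  have := R.adj₁.linear_comp_of_fullyFaithful R.fullyFaithful_iSt k
  exact ⟨Adjunction.restrictFullyFaithful ((R.adj₁.comp R.adj₂).serreDual SF.rightSerre ε)
    R.fullyFaithful_iSt (Functor.FullyFaithful.id T) (Iso.refl _) (Iso.refl _)⟩
end

section
/- Given a recollement (S, T, U) and a Serre functor F on T with quasi-inverse F', the functor j^? := j^* ∘ F' ∘ j_* ∘ j^* ∘ F : T → U is left adjoint to j_! : U → T. -/
/-!
Setting: `k` a field; `S`, `T`, `U` skeletally small `k`-linear triangulated categories
with finite-dimensional Hom-spaces, `T` with split idempotents.  A recollement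
`(S, T, U)` as in [BBD], and (right/left) Serre functors in the sense of
Reiten–Van den Bergh.
-/

open CategoryTheory CategoryTheory.Limits CategoryTheory.Pretriangulated

universe v₁ v₂ v₃ u₁ u₂ u₃ u₄

/-!
For `X : T` and `V : U`, Serre duality, the adjunctions `j_! ⊣ j^* ⊣ j_*`, full faithfulness
of `j_*`, and Serre duality again (now through `F F' ≅ 𝟭`) give natural isomorphisms
`Hom(X, j_! V) ≅ Hom(j_! V, F X)^∨ ≅ Hom(j_* V, j_* j^* F X)^∨ ≅ Hom(F' j_* j^* F X, j_* V)
  ≅ Hom(j^* F' j_* j^* F X, V)`.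
The middle step is `k`-linear because the unit of `j^* ⊣ j_*` is cancellable against morphisms
into the image of `j_*`, which makes `j_* j^*` act `k`-linearly on morphisms.
-/

namespace CategoryTheory.Adjunction

variable {C D : Type*} [Category C] [Category D]

section FullyFaithfulRightAdjoint

variable {G : C ⥤ D} {H : D ⥤ C} (adj : G ⊣ H) (hH : H.FullyFaithful)
include adj hH

lemma cancel_unit_comp {A : C} {Z : D} {u v : H.obj (G.obj A) ⟶ H.obj Z}
    (h : adj.unit.app A ≫ u = adj.unit.app A ≫ v) : u = v := by
  rw [← hH.map_preimage u, ← hH.map_preimage v]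
  congr 1
  apply (adj.homEquiv A Z).injective
  rwa [homEquiv_unit, homEquiv_unit, hH.map_preimage, hH.map_preimage]

lemma map_map_add [Preadditive C] {A B : C} (f g : A ⟶ B) :
    H.map (G.map (f + g)) = H.map (G.map f) + H.map (G.map g) := by
  apply adj.cancel_unit_comp hH
  simp only [← Functor.comp_map, ← adj.unit.naturality, Functor.id_map, Preadditive.add_comp,
    Preadditive.comp_add]

lemma map_map_smul {k : Type*} [Semiring k] [Preadditive C] [Linear k C] {A B : C} (c : k)
    (f : A ⟶ B) : H.map (G.map (c • f)) = c • H.map (G.map f) := by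
  apply adj.cancel_unit_comp hH
  simp only [← Functor.comp_map, ← adj.unit.naturality, Functor.id_map, Linear.smul_comp,
    Linear.comp_smul]

end FullyFaithfulRightAdjoint

variable (k : Type*) [Semiring k] [Preadditive C] [Linear k C]
  {L : D ⥤ C} {G : C ⥤ D} {H : D ⥤ C} (adj₁ : L ⊣ G) (adj₂ : G ⊣ H) (hH : H.FullyFaithful)

noncomputable def homLinearEquivOfTriple (V : D) (Y : C) :
    (L.obj V ⟶ Y) ≃ₗ[k] (H.obj V ⟶ H.obj (G.obj Y)) :=
  LinearEquiv.ofBijective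
    { toFun h := H.map (adj₁.homEquiv V Y h)
      map_add' f g := by
        simp only [homEquiv_unit, Functor.map_comp, adj₂.map_map_add hH, Preadditive.comp_add]
      map_smul' c f := by
        simp only [homEquiv_unit, Functor.map_comp, adj₂.map_map_smul hH, Linear.comp_smul,
          RingHom.id_apply] }
    ((adj₁.homEquiv V Y).trans hH.homEquiv).bijective

@[simp]
lemma homLinearEquivOfTriple_apply {V : D} {Y : C} (h : L.obj V ⟶ Y) :
    homLinearEquivOfTriple k adj₁ adj₂ hH V Y h = H.map (adj₁.homEquiv V Y h) :=
  rfl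

end CategoryTheory.Adjunction

namespace RightSerreStructure

open Adjunction

variable {k : Type*} [Field k] {C : Type*} [Category C] [Preadditive C] [Linear k C]
  {F F' : C ⥤ C} (σ : RightSerreStructure k C F) (ε : F' ⋙ F ≅ 𝟭 C)

def equivOfInverse (A B : C) : (F'.obj A ⟶ B) ≃ₗ[k] Module.Dual k (B ⟶ A) :=
  σ.equiv (F'.obj A) B ≪≫ₗ (Linear.homCongr k (Iso.refl B) (ε.app A).symm).dualMap

@[simp]
lemma equivOfInverse_apply {A B : C} (φ : F'.obj A ⟶ B) (u : B ⟶ A) :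
    σ.equivOfInverse ε A B φ u = σ.equiv (F'.obj A) B φ (u ≫ ε.inv.app A) := by
  simp [equivOfInverse, Linear.homCongr_apply]

variable {D : Type*} [Category D] {L : D ⥤ C} {G : C ⥤ D} {H : D ⥤ C}
  (adj₁ : L ⊣ G) (adj₂ : G ⊣ H) (hH : H.FullyFaithful)

noncomputable def leftAdjointHomEquiv (X : C) (V : D) :
    ((F ⋙ G ⋙ H ⋙ F' ⋙ G).obj X ⟶ V) ≃ (X ⟶ L.obj V) :=
  (adj₂.homEquiv _ V).trans
    (σ.equivOfInverse ε _ _ ≪≫ₗ (homLinearEquivOfTriple k adj₁ adj₂ hH V (F.obj X)).dualMap ≪≫ₗ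
      (σ.equiv X (L.obj V)).symm).toEquiv

variable {σ ε adj₁ adj₂ hH}

lemma equiv_leftAdjointHomEquiv {X : C} {V : D} (w : (F ⋙ G ⋙ H ⋙ F' ⋙ G).obj X ⟶ V)
    (h : L.obj V ⟶ F.obj X) :
    σ.equiv X (L.obj V) (σ.leftAdjointHomEquiv ε adj₁ adj₂ hH X V w) h =
      σ.equiv _ _ (adj₂.homEquiv _ V w) (H.map (adj₁.homEquiv V _ h) ≫ ε.inv.app _) := by
  simp [leftAdjointHomEquiv]

lemma leftAdjointHomEquiv_naturality_right {X : C} {V V' : D}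
    (w : (F ⋙ G ⋙ H ⋙ F' ⋙ G).obj X ⟶ V) (g : V ⟶ V') :
    σ.leftAdjointHomEquiv ε adj₁ adj₂ hH X V' (w ≫ g) =
      σ.leftAdjointHomEquiv ε adj₁ adj₂ hH X V w ≫ L.map g := by
  apply (σ.equiv X (L.obj V')).injective
  ext h
  rw [equiv_leftAdjointHomEquiv, σ.naturality_right, equiv_leftAdjointHomEquiv,
    homEquiv_naturality_right, σ.naturality_right, homEquiv_naturality_left, H.map_comp,
    Category.assoc]

lemma leftAdjointHomEquiv_naturality_left {X' X : C} {V : D} (f : X' ⟶ X)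
    (w : (F ⋙ G ⋙ H ⋙ F' ⋙ G).obj X ⟶ V) :
    σ.leftAdjointHomEquiv ε adj₁ adj₂ hH X' V ((F ⋙ G ⋙ H ⋙ F' ⋙ G).map f ≫ w) =
      f ≫ σ.leftAdjointHomEquiv ε adj₁ adj₂ hH X V w := by
  apply (σ.equiv X' (L.obj V)).injective
  ext h
  simp only [Functor.comp_map]
  rw [equiv_leftAdjointHomEquiv, σ.naturality_left, equiv_leftAdjointHomEquiv,
    homEquiv_naturality_left, σ.naturality_left,
    homEquiv_naturality_right, H.map_comp, Category.assoc, Category.assoc]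
  congr 2
  exact (ε.inv.naturality _).symm

variable (σ ε adj₁ adj₂ hH) in
noncomputable def leftAdjointAdjunction : (F ⋙ G ⋙ H ⋙ F' ⋙ G) ⊣ L :=
  Adjunction.mkOfHomEquiv
    { homEquiv := σ.leftAdjointHomEquiv ε adj₁ adj₂ hH
      homEquiv_naturality_left_symm f g := by
        rw [Equiv.symm_apply_eq, leftAdjointHomEquiv_naturality_left, Equiv.apply_symm_apply]
      homEquiv_naturality_right := leftAdjointHomEquiv_naturality_right }

end RightSerreStructure

/-- Given a recollement `(S, T, U)` and a Serre functor `F` on `T` with quasi-inverse `F'`,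
the functor `j^? := j^* ∘ F' ∘ j_* ∘ j^* ∘ F : T ⥤ U` is left adjoint to `j_! : U ⥤ T`. -/
theorem recollement_left_adjoint_of_jLo
    {k : Type u₄} [Field k]
    {S : Type u₁} {T : Type u₂} {U : Type u₃}
    [Category.{v₁} S] [Category.{v₂} T] [Category.{v₃} U]
    [HasZeroObject S] [HasZeroObject T] [HasZeroObject U]
    [Preadditive S] [Preadditive T] [Preadditive U]
    [CategoryTheory.Linear k S] [CategoryTheory.Linear k T] [CategoryTheory.Linear k U]
    [HasShift S ℤ] [HasShift T ℤ] [HasShift U ℤ]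
    [∀ n : ℤ, (shiftFunctor S n).Additive] [∀ n : ℤ, (shiftFunctor T n).Additive]
    [∀ n : ℤ, (shiftFunctor U n).Additive]
    [Pretriangulated S] [Pretriangulated T] [Pretriangulated U]
    [EssentiallySmall.{v₁} S] [EssentiallySmall.{v₂} T] [EssentiallySmall.{v₃} U]
    [∀ X Y : S, FiniteDimensional k (X ⟶ Y)]
    [∀ X Y : T, FiniteDimensional k (X ⟶ Y)]
    [∀ X Y : U, FiniteDimensional k (X ⟶ Y)]
    [IsIdempotentComplete T]
    (R : Recollement S T U)
    (SF : SerreFunctor k T) (F' : T ⥤ T)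
    (η : SF.F ⋙ F' ≅ 𝟭 T) (ε : F' ⋙ SF.F ≅ 𝟭 T) :
    Nonempty ((SF.F ⋙ R.jUp ⋙ R.jSt ⋙ F' ⋙ R.jUp) ⊣ R.jLo) :=
  ⟨SF.rightSerre.leftAdjointAdjunction ε R.adj₃ R.adj₄ R.fullyFaithful_jSt⟩
end

section
/- Given a recollement (S, T, U) and a Serre functor F on T with quasi-inverse F', the functor j^! := j^* ∘ F ∘ j_! ∘ j^* ∘ F' : T → U is right adjoint to j_* : U → T. -/
/-!
Setting: `k` a field; `S`, `T`, `U` skeletally small `k`-linear triangulated categories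
with finite-dimensional Hom-spaces, `T` with split idempotents.  A recollement
`(S, T, U)` as in [BBD], and (right/left) Serre functors in the sense of
Reiten–Van den Bergh.
-/

open CategoryTheory CategoryTheory.Limits CategoryTheory.Pretriangulated

universe v₁ v₂ v₃ u₁ u₂ u₃ u₄

/-!
Serre duality on `T` gives `T(j_* A, X) ≅ T(F' X, j_* A)^∨`. Since `j_!` is fully faithful and
left adjoint to `j^*`, the map `g ↦ j_! j^* g ≫ j_! ε_A` (`ε` the counit of `j^* ⊣ j_*`) identifies
`T(F' X, j_* A) ≅ U(j^* F' X, A)` with `T(j_! j^* F' X, j_! A)`, which is `k`-linear because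
`j_! j^*` is. Serre duality once more turns its dual into `T(j_! A, F j_! j^* F' X)`, and the
adjunction `j_! ⊣ j^*` gives `U(A, j^* F j_! j^* F' X)`. Naturality in `A` and `X` is checked
against the Serre pairing, which separates morphisms into objects of the form `F Z`.
-/

namespace CategoryTheory.Adjunction

variable {T : Type u₂} {U : Type u₃} [Category.{v₂} T] [Category.{v₃} U]
  {G : T ⥤ U} {L : U ⥤ T} (adj : L ⊣ G) (hL : L.FullyFaithful)
include adj hL

theorem comp_counit_app_injective (B : U) (Y : T) :
    Function.Injective fun d : L.obj B ⟶ L.obj (G.obj Y) => d ≫ adj.counit.app Y := by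
  intro d₁ d₂ h
  obtain ⟨d₁, rfl⟩ := hL.map_surjective d₁
  obtain ⟨d₂, rfl⟩ := hL.map_surjective d₂
  have : (adj.homEquiv B Y).symm d₁ = (adj.homEquiv B Y).symm d₂ := by
    simpa only [homEquiv_counit] using h
  rw [(adj.homEquiv B Y).symm.injective this]

variable [Preadditive T]

theorem additive_comp : (G ⋙ L).Additive where
  map_add {_ Z _ _} := adj.comp_counit_app_injective hL _ Z <| by
    simp only [Preadditive.add_comp, NatTrans.naturality, Functor.id_map, Preadditive.comp_add]

variable (k : Type*) [Semiring k] [CategoryTheory.Linear k T]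

theorem linear_comp : (G ⋙ L).Linear k where
  map_smul {_ Z} _ _ := adj.comp_counit_app_injective hL _ Z <| by
    simp only [Linear.smul_comp, NatTrans.naturality, Functor.id_map, Linear.comp_smul]

variable {R : U ⥤ T} (adj' : G ⊣ R)

noncomputable def coreflectionHomEquiv (Y : T) (A : U) :
    (Y ⟶ R.obj A) ≃ₗ[k] (L.obj (G.obj Y) ⟶ L.obj A) :=
  ((adj'.homEquiv Y A).symm.trans hL.homEquiv).toLinearEquiv <| by
    have := adj.additive_comp hL
    have := adj.linear_comp hL k
    have he (g : Y ⟶ R.obj A) : ((adj'.homEquiv Y A).symm.trans hL.homEquiv) g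
        = (G ⋙ L).map g ≫ L.map (adj'.counit.app A) := by
      simp [homEquiv_counit]
    exact ⟨fun g₁ g₂ => by simp only [he, Functor.map_add, Preadditive.add_comp],
      fun a g => by simp only [he, Functor.map_smul, Linear.smul_comp]⟩

theorem coreflectionHomEquiv_apply {Y : T} {A : U} (g : Y ⟶ R.obj A) :
    adj.coreflectionHomEquiv hL k adj' Y A g = L.map (G.map g) ≫ L.map (adj'.counit.app A) := by
  change ((adj'.homEquiv Y A).symm.trans hL.homEquiv) g = _
  simp [homEquiv_counit]

theorem coreflectionHomEquiv_comp {Y' Y : T} {A : U} (y : Y' ⟶ Y) (g : Y ⟶ R.obj A) :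
    adj.coreflectionHomEquiv hL k adj' Y' A (y ≫ g)
      = L.map (G.map y) ≫ adj.coreflectionHomEquiv hL k adj' Y A g := by
  simp [coreflectionHomEquiv_apply]

theorem coreflectionHomEquiv_comp_map {Y : T} {A A' : U} (g : Y ⟶ R.obj A) (a : A ⟶ A') :
    adj.coreflectionHomEquiv hL k adj' Y A' (g ≫ R.map a)
      = adj.coreflectionHomEquiv hL k adj' Y A g ≫ L.map a := by
  have h := adj'.counit.naturality a
  dsimp at h
  simp only [coreflectionHomEquiv_apply, Functor.map_comp, Category.assoc]
  rw [← L.map_comp (G.map (R.map a)), h, L.map_comp]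

end CategoryTheory.Adjunction

open Module

namespace RightSerreStructure

variable {k : Type u₄} [Field k] {T : Type u₂} [Category.{v₂} T] [Preadditive T]
  [CategoryTheory.Linear k T] [∀ X Y : T, FiniteDimensional k (X ⟶ Y)] {F : T ⥤ T}
  (SS : RightSerreStructure k T F) {F' : T ⥤ T} (ε : F' ⋙ F ≅ 𝟭 T)

noncomputable def dualEquiv (X Y : T) : (Y ⟶ F.obj X) ≃ₗ[k] Dual k (X ⟶ Y) :=
  (evalEquiv k _).trans (SS.equiv X Y).dualMap

@[simp]
theorem dualEquiv_apply {X Y : T} (m : Y ⟶ F.obj X) (φ : X ⟶ Y) :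
    SS.dualEquiv X Y m φ = SS.equiv X Y φ m :=
  rfl

theorem hom_ext {X Y : T} {m₁ m₂ : Y ⟶ F.obj X}
    (h : ∀ φ : X ⟶ Y, SS.equiv X Y φ m₁ = SS.equiv X Y φ m₂) : m₁ = m₂ :=
  (SS.dualEquiv X Y).injective (LinearMap.ext h)

noncomputable def leftSerreStructure : LeftSerreStructure k T F' where
  equiv X Y := (Linear.homCongr k (Iso.refl X) (ε.app Y).symm).trans (SS.dualEquiv (F'.obj Y) X)
  naturality_left f φ u := by
    simp [Linear.homCongr, SS.naturality_right]
  naturality_right φ g u := by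
    have hε : g ≫ ε.inv.app _ = ε.inv.app _ ≫ F.map (F'.map g) := by
      simpa using ε.inv.naturality g
    simp [Linear.homCongr, hε, SS.naturality_left]

variable {U : Type u₃} [Category.{v₃} U] {G : T ⥤ U} {L R : U ⥤ T} (adj : L ⊣ G)
  (hL : L.FullyFaithful) (adj' : G ⊣ R)

noncomputable def homEquivOfCoreflection (A : U) (X : T) :
    (R.obj A ⟶ X) ≃ₗ[k] (L.obj A ⟶ F.obj (L.obj (G.obj (F'.obj X)))) :=
  ((SS.leftSerreStructure ε).equiv (R.obj A) X).trans <|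
    (adj.coreflectionHomEquiv hL k adj' (F'.obj X) A).symm.dualMap.trans
      (SS.dualEquiv _ (L.obj A)).symm

theorem equiv_homEquivOfCoreflection {A : U} {X : T} (φ : R.obj A ⟶ X)
    (g : F'.obj X ⟶ R.obj A) :
    SS.equiv _ _ (adj.coreflectionHomEquiv hL k adj' _ A g)
        (SS.homEquivOfCoreflection ε adj hL adj' A X φ)
      = (SS.leftSerreStructure ε).equiv (R.obj A) X φ g := by
  rw [← dualEquiv_apply, homEquivOfCoreflection, LinearEquiv.trans_apply,
    LinearEquiv.trans_apply, LinearEquiv.apply_symm_apply, LinearEquiv.dualMap_apply,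
    LinearEquiv.symm_apply_apply]

theorem homEquivOfCoreflection_comp {A : U} {X X' : T} (φ : R.obj A ⟶ X) (x : X ⟶ X') :
    SS.homEquivOfCoreflection ε adj hL adj' A X' (φ ≫ x)
      = SS.homEquivOfCoreflection ε adj hL adj' A X φ ≫ F.map (L.map (G.map (F'.map x))) := by
  refine SS.hom_ext fun u => ?_
  obtain ⟨g, rfl⟩ := (adj.coreflectionHomEquiv hL k adj' _ A).surjective u
  rw [← SS.naturality_left, ← adj.coreflectionHomEquiv_comp, equiv_homEquivOfCoreflection,
    equiv_homEquivOfCoreflection, LeftSerreStructure.naturality_right]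

theorem homEquivOfCoreflection_map_comp {A' A : U} {X : T} (a : A' ⟶ A) (φ : R.obj A ⟶ X) :
    SS.homEquivOfCoreflection ε adj hL adj' A' X (R.map a ≫ φ)
      = L.map a ≫ SS.homEquivOfCoreflection ε adj hL adj' A X φ := by
  refine SS.hom_ext fun u => ?_
  obtain ⟨g, rfl⟩ := (adj.coreflectionHomEquiv hL k adj' _ A').surjective u
  rw [← SS.naturality_right, ← adj.coreflectionHomEquiv_comp_map, equiv_homEquivOfCoreflection,
    equiv_homEquivOfCoreflection, LeftSerreStructure.naturality_left]

noncomputable def adjunctionOfCoreflection : R ⊣ F' ⋙ G ⋙ L ⋙ F ⋙ G :=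
  Adjunction.mkOfHomEquiv
    { homEquiv A X := (SS.homEquivOfCoreflection ε adj hL adj' A X).toEquiv.trans
        (adj.homEquiv A _)
      homEquiv_naturality_left_symm a g := by
        rw [Equiv.symm_apply_eq]
        simp [homEquivOfCoreflection_map_comp, Adjunction.homEquiv_naturality_left]
      homEquiv_naturality_right φ x := by
        simp [homEquivOfCoreflection_comp, Adjunction.homEquiv_naturality_right] }

end RightSerreStructure

/-- Given a recollement `(S, T, U)` and a Serre functor `F` on `T` with quasi-inverse `F'`,
the functor `j^! := j^* ∘ F ∘ j_! ∘ j^* ∘ F' : T ⥤ U` is right adjoint to `j_* : U ⥤ T`. -/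
theorem recollement_right_adjoint_of_jSt
    {k : Type u₄} [Field k]
    {S : Type u₁} {T : Type u₂} {U : Type u₃}
    [Category.{v₁} S] [Category.{v₂} T] [Category.{v₃} U]
    [HasZeroObject S] [HasZeroObject T] [HasZeroObject U]
    [Preadditive S] [Preadditive T] [Preadditive U]
    [CategoryTheory.Linear k S] [CategoryTheory.Linear k T] [CategoryTheory.Linear k U]
    [HasShift S ℤ] [HasShift T ℤ] [HasShift U ℤ]
    [∀ n : ℤ, (shiftFunctor S n).Additive] [∀ n : ℤ, (shiftFunctor T n).Additive]
    [∀ n : ℤ, (shiftFunctor U n).Additive]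
    [Pretriangulated S] [Pretriangulated T] [Pretriangulated U]
    [EssentiallySmall.{v₁} S] [EssentiallySmall.{v₂} T] [EssentiallySmall.{v₃} U]
    [∀ X Y : S, FiniteDimensional k (X ⟶ Y)]
    [∀ X Y : T, FiniteDimensional k (X ⟶ Y)]
    [∀ X Y : U, FiniteDimensional k (X ⟶ Y)]
    [IsIdempotentComplete T]
    (R : Recollement S T U)
    (SF : SerreFunctor k T) (F' : T ⥤ T)
    (η : SF.F ⋙ F' ≅ 𝟭 T) (ε : F' ⋙ SF.F ≅ 𝟭 T) :
    Nonempty (R.jSt ⊣ (F' ⋙ R.jUp ⋙ R.jLo ⋙ SF.F ⋙ R.jUp)) :=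
  ⟨SF.rightSerre.adjunctionOfCoreflection ε R.adj₃ R.fullyFaithful_jLo R.adj₄⟩
end
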